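/- Bounded distortion of the gnomonic model on bounded sets: for all u, v ∈ ℝ^d, d_S(u,v) ≤ ‖u − v‖; and for every ρ > 0, if u and v lie in the closed Euclidean ball of radius ρ centered at the origin, then d_S(u,v) ≥ ‖u − v‖/(1 + ρ²). -/

import Mathlib

/-!
Write `N = √(1 + ‖u‖²) √(1 + ‖v‖²)` and `m = 1 + ⟪u, v⟫`, so that `cos d_S(u, v) = m / N`.
AM-GM gives `N - m ≤ ‖u - v‖² / 2` and Cauchy-Schwarz in `ℝ²` gives `N + m ≥ 2`, hence
`tan² (d_S / 2) = (N - m) / (N + m) ≤ ‖u - v‖² / 4` and `d_S ≤ 2 tan (d_S / 2) ≤ ‖u - v‖`.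
Lagrange's identity `N² - m² = ‖u - v‖² + (‖u‖² ‖v‖² - ⟪u, v⟫²)` gives
`sin d_S ≥ ‖u - v‖ / N ≥ ‖u - v‖ / (1 + ρ²)` on the ball of radius `ρ`, and `d_S ≥ sin d_S`.
-/

open scoped RealInnerProductSpace
open Metric Real

/-- The gnomonic spherical distance on `ℝ^d`: the pullback of the great-circle distance on the
unit sphere through the gnomonic (central) projection of the open upper hemisphere. -/
noncomputable def gnomonicDist {d : ℕ} (u v : EuclideanSpace ℝ (Fin d)) : ℝ :=
  Real.arccos ((1 + ⟪u, v⟫) / (Real.sqrt (1 + ‖u‖ ^ 2) * Real.sqrt (1 + ‖v‖ ^ 2)))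

namespace Real

/-- The hypothesis says `tan (θ / 2) ≤ r / 2`, and `θ / 2 ≤ tan (θ / 2)`. -/
lemma le_of_four_mul_one_sub_cos_le {θ r : ℝ} (hθ₀ : 0 ≤ θ) (hθπ : θ ≤ π) (hr : 0 ≤ r)
    (h : 4 * (1 - cos θ) ≤ r ^ 2 * (1 + cos θ)) : θ ≤ r := by
  set φ := θ / 2
  have hθ : θ = 2 * φ := by ring
  have hsin : 0 ≤ sin φ := sin_nonneg_of_nonneg_of_le_pi (by linarith) (by linarith)
  have hcos : 0 ≤ cos φ := cos_nonneg_of_mem_Icc ⟨by linarith, by linarith⟩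
  have hsq : (2 * sin φ) ^ 2 ≤ (r * cos φ) ^ 2 := by
    rw [hθ, cos_two_mul] at h
    nlinarith [sin_sq_add_cos_sq φ]
  have hle : 2 * sin φ ≤ r * cos φ :=
    (pow_le_pow_iff_left₀ (by positivity) (by positivity) two_ne_zero).mp hsq
  have hφ : φ < π / 2 := by
    refine lt_of_le_of_ne (by linarith) fun hφ => ?_
    rw [hφ, sin_pi_div_two, cos_pi_div_two] at hle
    linarith
  have hcos_pos : 0 < cos φ := cos_pos_of_mem_Ioo ⟨by linarith, hφ⟩
  have htan : 2 * tan φ ≤ r := by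
    rw [tan_eq_sin_div_cos, mul_div_assoc', div_le_iff₀ hcos_pos]
    exact hle
  linarith [le_tan (by linarith) hφ]

lemma arccos_le_of_four_mul_one_sub_le {c r : ℝ} (hr : 0 ≤ r)
    (h : 4 * (1 - c) ≤ r ^ 2 * (1 + c)) : arccos c ≤ r := by
  rcases le_or_gt c 1 with hc₁ | hc₁
  · have hc : -1 ≤ c := by nlinarith [sq_nonneg r]
    refine le_of_four_mul_one_sub_cos_le (arccos_nonneg c) (arccos_le_pi c) hr ?_
    rwa [cos_arccos hc hc₁]
  · rw [arccos_eq_zero.mpr hc₁.le]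
    exact hr

lemma le_arccos_of_sq_le_one_sub_sq {c r : ℝ} (h : r ^ 2 ≤ 1 - c ^ 2) : r ≤ arccos c :=
  calc r ≤ √(1 - c ^ 2) := le_sqrt_of_sq_le h
    _ = sin (arccos c) := (sin_arccos c).symm
    _ ≤ arccos c := sin_le (arccos_nonneg c)

lemma one_add_mul_le_sqrt_one_add_sq_mul_sqrt (x y : ℝ) :
    1 + x * y ≤ √(1 + x ^ 2) * √(1 + y ^ 2) := by
  rw [← sqrt_mul (by positivity)]
  exact le_sqrt_of_sq_le (by nlinarith [sq_nonneg (x - y)])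

lemma sqrt_one_add_sq_mul_sqrt_le (x y : ℝ) :
    √(1 + x ^ 2) * √(1 + y ^ 2) ≤ 1 + (x ^ 2 + y ^ 2) / 2 := by
  have hx := sq_sqrt (show 0 ≤ 1 + x ^ 2 by positivity)
  have hy := sq_sqrt (show 0 ≤ 1 + y ^ 2 by positivity)
  nlinarith [sq_nonneg (√(1 + x ^ 2) - √(1 + y ^ 2))]

end Real

section Gnomonic

variable {E : Type*} [NormedAddCommGroup E] [InnerProductSpace ℝ E]

noncomputable def gnomonicCos (u v : E) : ℝ :=
  (1 + ⟪u, v⟫) / (√(1 + ‖u‖ ^ 2) * √(1 + ‖v‖ ^ 2))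

lemma four_mul_one_sub_gnomonicCos_le (u v : E) :
    4 * (1 - gnomonicCos u v) ≤ ‖u - v‖ ^ 2 * (1 + gnomonicCos u v) := by
  set N := √(1 + ‖u‖ ^ 2) * √(1 + ‖v‖ ^ 2)
  have hN : 0 < N := by positivity
  have hsub : N - (1 + ⟪u, v⟫) ≤ ‖u - v‖ ^ 2 / 2 := by
    rw [norm_sub_sq_real]
    linarith [sqrt_one_add_sq_mul_sqrt_le ‖u‖ ‖v‖]
  have hadd : 2 ≤ N + (1 + ⟪u, v⟫) := by
    linarith [one_add_mul_le_sqrt_one_add_sq_mul_sqrt ‖u‖ ‖v‖,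
      (abs_le.mp (abs_real_inner_le_norm u v)).1]
  rw [gnomonicCos, one_sub_div hN.ne', one_add_div hN.ne', mul_div_assoc', mul_div_assoc',
    div_le_div_iff_of_pos_right hN]
  nlinarith [mul_nonneg (sq_nonneg ‖u - v‖) (sub_nonneg.mpr hadd)]

lemma norm_sub_sq_div_le_one_sub_gnomonicCos_sq (u v : E) :
    ‖u - v‖ ^ 2 / ((1 + ‖u‖ ^ 2) * (1 + ‖v‖ ^ 2)) ≤ 1 - gnomonicCos u v ^ 2 := by
  have hpos : 0 < (1 + ‖u‖ ^ 2) * (1 + ‖v‖ ^ 2) := by positivity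
  have hcos : gnomonicCos u v ^ 2 = (1 + ⟪u, v⟫) ^ 2 / ((1 + ‖u‖ ^ 2) * (1 + ‖v‖ ^ 2)) := by
    rw [gnomonicCos, div_pow, mul_pow, sq_sqrt (by positivity), sq_sqrt (by positivity)]
  have hCS : ⟪u, v⟫ ^ 2 ≤ (‖u‖ * ‖v‖) ^ 2 :=
    sq_le_sq' (abs_le.mp (abs_real_inner_le_norm u v)).1 (real_inner_le_norm u v)
  rw [hcos, one_sub_div hpos.ne']
  refine div_le_div_of_nonneg_right ?_ hpos.le
  rw [norm_sub_sq_real]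
  nlinarith

end Gnomonic

theorem gnomonicDist_bounded_distortion {d : ℕ} (u v : EuclideanSpace ℝ (Fin d)) :
    gnomonicDist u v ≤ ‖u - v‖ ∧
    ∀ ρ : ℝ, 0 < ρ →
      u ∈ closedBall (0 : EuclideanSpace ℝ (Fin d)) ρ →
      v ∈ closedBall (0 : EuclideanSpace ℝ (Fin d)) ρ →
        ‖u - v‖ / (1 + ρ ^ 2) ≤ gnomonicDist u v := by
  have hdist : gnomonicDist u v = arccos (gnomonicCos u v) := rfl
  rw [hdist]
  refine ⟨arccos_le_of_four_mul_one_sub_le (norm_nonneg _)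
    (four_mul_one_sub_gnomonicCos_le u v), fun ρ _ hu hv => ?_⟩
  rw [mem_closedBall_zero_iff] at hu hv
  apply le_arccos_of_sq_le_one_sub_sq
  calc (‖u - v‖ / (1 + ρ ^ 2)) ^ 2 = ‖u - v‖ ^ 2 / ((1 + ρ ^ 2) * (1 + ρ ^ 2)) := by
        rw [div_pow, sq (1 + ρ ^ 2)]
    _ ≤ ‖u - v‖ ^ 2 / ((1 + ‖u‖ ^ 2) * (1 + ‖v‖ ^ 2)) := by gcongr
    _ ≤ 1 - gnomonicCos u v ^ 2 := norm_sub_sq_div_le_one_sub_gnomonicCos_sq u v
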